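/- arXiv:1411.4887 — 4 statements merged into one kernel-verified Lean document; each statement's English description precedes it below -/
import Mathlib

section
/- Let V be a 3-dimensional real inner product space and A : V → V a symmetric endomorphism. Then there exists a 2-dimensional subspace P of V such that ⟨A v₁, v₂⟩ = 0 for all v₁, v₂ ∈ P and ⟨A w, w⟩ = 0 for all w ∈ P⊥, if and only if det(A) = 0 and trace(A) = 0. -/
/-! If `A` maps a plane `P` into the line `Pᗮ`, then `A` has a kernel; and `trace A` is the sum of
the traces of the compressions of `A` to `P` and to `Pᗮ`, whose quadratic forms both vanish.
Conversely, the eigenvalues of `A` are `0, c, -c` with orthonormal eigenvectors `e₀, e₁, e₂`, and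
`P = span {e₀, e₁ + e₂}` works: `A` maps `P` into the line through `e₁ - e₂`, which is `Pᗮ`, and
maps that line back into `P`. -/

open scoped RealInnerProductSpace
open Module

section

variable {V : Type*} [NormedAddCommGroup V] [InnerProductSpace ℝ V]

theorem Submodule.map_le_orthogonal_iff {A : V →ₗ[ℝ] V} {P : Submodule ℝ V} :
    P.map A ≤ Pᗮ ↔ ∀ v₁ ∈ P, ∀ v₂ ∈ P, ⟪A v₁, v₂⟫ = 0 := by
  rw [Submodule.map_le_iff_le_comap]
  simp only [SetLike.le_def, Submodule.mem_comap, Submodule.mem_orthogonal']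

theorem LinearMap.det_eq_zero_of_map_le {K M : Type*} [Field K] [AddCommGroup M] [Module K M]
    [FiniteDimensional K M] {A : M →ₗ[K] M} {P Q : Submodule K M} (hPQ : P.map A ≤ Q)
    (hlt : finrank K Q < finrank K P) : A.det = 0 := by
  refine LinearMap.det_eq_zero_iff_ker_ne_bot.mpr fun hker => hlt.not_ge ?_
  calc finrank K P = finrank K (P.map A) :=
        (Submodule.equivMapOfInjective A (LinearMap.ker_eq_bot.mp hker) P).finrank_eq
    _ ≤ finrank K Q := Submodule.finrank_mono hPQ

variable [FiniteDimensional ℝ V]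

theorem LinearMap.trace_eq_zero_of_inner_map_self_eq_zero {T : V →ₗ[ℝ] V}
    (hT : ∀ x, ⟪T x, x⟫ = 0) : T.trace ℝ V = 0 := by
  rw [T.trace_eq_sum_inner (stdOrthonormalBasis ℝ V)]
  exact Finset.sum_eq_zero fun i _ => by rw [real_inner_comm, hT]

theorem LinearMap.trace_comp_starProjection_eq_zero {A : V →ₗ[ℝ] V} {K : Submodule ℝ V}
    (hK : ∀ x ∈ K, ⟪A x, x⟫ = 0) : (A ∘ₗ K.starProjection.toLinearMap).trace ℝ V = 0 := by
  set π : V →ₗ[ℝ] V := K.starProjection.toLinearMap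
  have hπ : π ∘ₗ π = π :=
    ContinuousLinearMap.IsIdempotentElem.toLinearMap K.isIdempotentElem_starProjection
  rw [← hπ, ← LinearMap.comp_assoc, LinearMap.trace_comp_comm']
  refine trace_eq_zero_of_inner_map_self_eq_zero fun x => ?_
  simp only [LinearMap.comp_apply, π, ContinuousLinearMap.coe_coe]
  rw [K.inner_starProjection_left_eq_right]
  exact hK _ (K.starProjection_apply_mem x)

theorem LinearMap.trace_eq_zero_of_inner_map_self_eq_zero_on_orthogonal {A : V →ₗ[ℝ] V}
    {K : Submodule ℝ V} (hK : ∀ x ∈ K, ⟪A x, x⟫ = 0) (hKo : ∀ x ∈ Kᗮ, ⟪A x, x⟫ = 0) :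
    A.trace ℝ V = 0 := by
  have hA : A = A ∘ₗ K.starProjection.toLinearMap + A ∘ₗ Kᗮ.starProjection.toLinearMap := by
    ext x; simp
  rw [hA, map_add, trace_comp_starProjection_eq_zero hK, trace_comp_starProjection_eq_zero hKo,
    add_zero]

theorem exists_plane_of_orthogonal_triple (hV : finrank ℝ V = 3)
    {A : V →ₗ[ℝ] V} {z u w : V} (hz : z ≠ 0) (hu : u ≠ 0) (hw : w ≠ 0) (hzu : ⟪z, u⟫ = 0)
    (hzw : ⟪z, w⟫ = 0) (huw : ⟪u, w⟫ = 0) (hAz : A z = 0) {c : ℝ} (hAu : A u = c • w)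
    (hAw : ⟪A w, w⟫ = 0) :
    ∃ P : Submodule ℝ V, finrank ℝ P = 2 ∧
        (∀ v₁ ∈ P, ∀ v₂ ∈ P, ⟪A v₁, v₂⟫ = 0) ∧
        (∀ w ∈ Pᗮ, ⟪A w, w⟫ = 0) := by
  set P := Submodule.span ℝ {z, u}
  have hP : finrank ℝ P = 2 := by
    have hli : LinearIndependent ℝ ![z, u] := by
      refine linearIndependent_of_ne_zero_of_inner_eq_zero ?_ ?_
      · intro i; fin_cases i <;> simpa
      · intro i j hij
        fin_cases i <;> fin_cases j <;> simp_all [real_inner_comm]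
    have := finrank_span_eq_card hli
    rwa [Matrix.range_cons_cons_empty, Fintype.card_fin] at this
  have hwP : (ℝ ∙ w) ≤ Pᗮ := Submodule.isOrtho_span.mpr (by simp [real_inner_comm, hzw, huw])
  have hPo : Pᗮ = ℝ ∙ w := by
    refine (Submodule.eq_of_le_of_finrank_le hwP ?_).symm
    have := P.finrank_add_finrank_orthogonal
    rw [finrank_span_singleton hw]
    omega
  refine ⟨P, hP, Submodule.map_le_orthogonal_iff.mp ?_, ?_⟩
  · refine le_trans ?_ hwP
    rw [Submodule.map_span, Submodule.span_le, Set.image_pair, hAz, hAu]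
    simp [Set.insert_subset_iff, Submodule.smul_mem _ _ (Submodule.mem_span_singleton_self w)]
  · intro x hx
    obtain ⟨t, rfl⟩ := Submodule.mem_span_singleton.mp (hPo ▸ hx)
    simp [real_inner_smul_left, real_inner_smul_right, hAw]

theorem exists_plane_of_orthonormal_eigenvectors
    (hV : finrank ℝ V = 3) {A : V →ₗ[ℝ] V} {e : Fin 3 → V} (he : Orthonormal ℝ e) {c : ℝ}
    (h0 : A (e 0) = 0) (h1 : A (e 1) = c • e 1) (h2 : A (e 2) = -c • e 2) :
    ∃ P : Submodule ℝ V, finrank ℝ P = 2 ∧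
        (∀ v₁ ∈ P, ∀ v₂ ∈ P, ⟪A v₁, v₂⟫ = 0) ∧
        (∀ w ∈ Pᗮ, ⟪A w, w⟫ = 0) := by
  have hee : ∀ i j, ⟪e i, e j⟫ = if i = j then 1 else 0 := orthonormal_iff_ite.mp he
  have hu : e 1 + e 2 ≠ 0 := fun h => by
    simpa [inner_add_right, hee, he.1] using congrArg (⟪e 1, ·⟫) h
  have hw : e 1 - e 2 ≠ 0 := fun h => by
    simpa [inner_sub_right, hee, he.1] using congrArg (⟪e 1, ·⟫) h
  have huw : ⟪e 1 + e 2, e 1 - e 2⟫ = 0 := by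
    simp [inner_add_left, inner_sub_right, hee, he.1]
  refine exists_plane_of_orthogonal_triple hV (he.ne_zero 0) hu hw
    (by simp [inner_add_right, hee]) (by simp [inner_sub_right, hee]) huw h0 (c := c) ?_ ?_
  · rw [map_add, h1, h2, smul_sub, neg_smul, sub_eq_add_neg]
  · rw [map_sub, h1, h2, neg_smul, sub_neg_eq_add, ← smul_add, real_inner_smul_left, huw,
      mul_zero]

end

/-- A symmetric endomorphism of a 3-dimensional real inner product space admits
a 2-dimensional subspace `P` with `⟨A v₁, v₂⟩ = 0` for all `v₁, v₂ ∈ P` and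
`⟨A w, w⟩ = 0` for all `w ∈ Pᗮ`, if and only if `det A = 0` and `trace A = 0`. -/
theorem symmetric_endo_plane_iff_det_trace_zero
    {V : Type*} [NormedAddCommGroup V] [InnerProductSpace ℝ V]
    [FiniteDimensional ℝ V] (hV : Module.finrank ℝ V = 3)
    (A : V →ₗ[ℝ] V) (hA : A.IsSymmetric) :
    (∃ P : Submodule ℝ V, Module.finrank ℝ P = 2 ∧
        (∀ v₁ ∈ P, ∀ v₂ ∈ P, ⟪A v₁, v₂⟫ = 0) ∧
        (∀ w ∈ Pᗮ, ⟪A w, w⟫ = 0)) ↔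
      LinearMap.det A = 0 ∧ LinearMap.trace ℝ V A = 0 := by
  constructor
  · rintro ⟨P, hP, hPP, hPo⟩
    have hPo1 : finrank ℝ Pᗮ = 1 := by
      have := P.finrank_add_finrank_orthogonal
      omega
    exact ⟨LinearMap.det_eq_zero_of_map_le (Submodule.map_le_orthogonal_iff.mpr hPP) (by omega),
      LinearMap.trace_eq_zero_of_inner_map_self_eq_zero_on_orthogonal
        (fun x hx => hPP x hx x hx) hPo⟩
  · rintro ⟨hdet, htr⟩
    set μ := hA.eigenvalues hV
    set e := hA.eigenvectorBasis hV
    have he : ∀ i, A (e i) = μ i • e i := hA.apply_eigenvectorBasis hV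
    have hprod : ∏ i, μ i = 0 := by simpa [hA.det_eq_prod_eigenvalues hV] using hdet
    have hsum : ∑ i, μ i = 0 := by simpa [hA.trace_eq_sum_eigenvalues hV] using htr
    obtain ⟨k, -, hk⟩ := Finset.prod_eq_zero_iff.mp hprod
    have hneg : μ (2 + k) = -μ (1 + k) := by
      have := (Equiv.sum_comp (Equiv.addRight k) μ).trans hsum
      simp only [Fin.sum_univ_three, Equiv.coe_addRight, zero_add, hk] at this
      linarith
    refine exists_plane_of_orthonormal_eigenvectors hV (e := fun l => e (l + k)) (c := μ (1 + k))
      (e.orthonormal.comp _ (add_left_injective k)) ?_ ?_ ?_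
    · rw [zero_add, he, hk, zero_smul]
    · exact he _
    · rw [he, hneg]
end

section
/- In a 4-dimensional oriented real inner product space V, every bivector lying in the orthogonal complement Λ²(v⊥) of v ∧ v⊥, for a unit vector v, is simple; consequently, if a symmetric endomorphism W of Λ²V leaves v ∧ v⊥ invariant, then all of Λ²V admits a basis of eigenvectors of W that are simple bivectors. -/
/-!
The bivectors of `Λ²(v⊥)` are combinations `a e₀∧e₁ + b e₀∧e₂ + c e₁∧e₂` of a basis of the
3-dimensional space `v⊥`, and such a combination factors explicitly, e.g. as
`(a e₀ - c e₂) ∧ (e₁ + (b / a) e₂)` when `a ≠ 0`. Splitting `x = ⟪v, x⟫ v + x'` shows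
`Λ²V = v ∧ v⊥ + Λ²(v⊥)`, and the two summands are orthogonal, so `Λ²(v⊥) = (v ∧ v⊥)ᗮ`. A symmetric
`W` preserving `v ∧ v⊥` preserves its complement as well; diagonalising `W` on both pieces gives an
eigenbasis whose vectors are `v ∧ u` or lie in `Λ²(v⊥)`, hence are simple.
-/

open scoped RealInnerProductSpace
open Module

namespace LinearMap

variable {R M N : Type*} [Field R] [AddCommGroup M] [Module R M] [AddCommGroup N] [Module R N]
  {w : M →ₗ[R] M →ₗ[R] N}

theorem exists_apply_eq_of_mem_span_three (hw : w.IsAlt) (e₀ e₁ e₂ : M) {ξ : N}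
    (hξ : ξ ∈ Submodule.span R {w e₀ e₁, w e₀ e₂, w e₁ e₂}) : ∃ x y, ξ = w x y := by
  obtain ⟨a, b, c, rfl⟩ : ∃ a b c : R, ξ = a • w e₀ e₁ + b • w e₀ e₂ + c • w e₁ e₂ := by
    simpa [Submodule.mem_span_insert, Submodule.mem_span_singleton, add_assoc] using hξ
  by_cases ha : a = 0
  · refine ⟨b • e₀ + c • e₁, e₂, ?_⟩
    simp [ha]
  · refine ⟨a • e₀ - c • e₂, e₁ + (b / a) • e₂, ?_⟩
    simp only [map_add, map_sub, map_smul, sub_apply, smul_apply,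
      hw.self_eq_zero, ← hw.neg e₁ e₂, smul_neg, smul_zero]
    match_scalars <;> field_simp

theorem exists_apply_eq_of_mem_span_image2 (hw : w.IsAlt) {K : Submodule R M}
    (hK : finrank R K = 3) {ξ : N}
    (hξ : ξ ∈ Submodule.span R (Set.image2 (fun x y => w x y) K K)) : ∃ x y, ξ = w x y := by
  have : Module.Finite R K := Module.finite_of_finrank_eq_succ hK
  let e : Fin 3 → M := K.subtype ∘ finBasisOfFinrankEq R K hK
  have he : Submodule.span R (Set.range e) = K := by
    rw [Set.range_comp, Submodule.span_image, Basis.span_eq, Submodule.map_subtype_top]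
  refine exists_apply_eq_of_mem_span_three hw (e 0) (e 1) (e 2) ?_
  rw [← he, ← Submodule.map₂_eq_span_image2, Submodule.map₂_span_span] at hξ
  refine Submodule.span_le.mpr ?_ hξ
  rintro _ ⟨_, ⟨i, rfl⟩, _, ⟨j, rfl⟩, rfl⟩
  fin_cases i <;> fin_cases j <;>
    simp [hw.self_eq_zero, ← hw.neg (e 0) (e 1), ← hw.neg (e 0) (e 2), ← hw.neg (e 1) (e 2),
      Submodule.mem_span_of_mem]

end LinearMap

namespace LinearMap.IsSymmetric

variable {𝕜 E : Type*} [RCLike 𝕜] [NormedAddCommGroup E] [InnerProductSpace 𝕜 E]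
  {T : E →ₗ[𝕜] E} {F : Submodule 𝕜 E}

theorem apply_mem_orthogonal (hT : T.IsSymmetric) (hF : ∀ x ∈ F, T x ∈ F) :
    ∀ x ∈ Fᗮ, T x ∈ Fᗮ := by
  intro x hx y hy
  rw [← hT]
  exact hx _ (hF y hy)

theorem exists_orthonormalBasis_eigenvectors_of_invariant (hT : T.IsSymmetric)
    [FiniteDimensional 𝕜 E] (hF : ∀ x ∈ F, T x ∈ F) :
    ∃ b : OrthonormalBasis (Fin (finrank 𝕜 F)) 𝕜 F, ∀ i, ∃ μ : 𝕜, T (b i) = μ • (b i : E) :=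
  ⟨(hT.restrict_invariant hF).eigenvectorBasis rfl, fun i =>
    ⟨_, congrArg Subtype.val ((hT.restrict_invariant hF).apply_eigenvectorBasis rfl i)⟩⟩

theorem exists_orthonormalBasis_eigenvectors_mem_or_mem_orthogonal (hT : T.IsSymmetric)
    [FiniteDimensional 𝕜 E] (hF : ∀ x ∈ F, T x ∈ F) :
    ∃ b : OrthonormalBasis (Fin (finrank 𝕜 E)) 𝕜 E,
      ∀ i, (b i ∈ F ∨ b i ∈ Fᗮ) ∧ ∃ μ : 𝕜, T (b i) = μ • b i := by
  obtain ⟨b₁, hb₁⟩ := hT.exists_orthonormalBasis_eigenvectors_of_invariant hF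
  obtain ⟨b₂, hb₂⟩ :=
    hT.exists_orthonormalBasis_eigenvectors_of_invariant (hT.apply_mem_orthogonal hF)
  have hcard : Fintype.card (Fin (finrank 𝕜 F) ⊕ Fin (finrank 𝕜 Fᗮ)) = finrank 𝕜 E := by
    simp [F.finrank_add_finrank_orthogonal]
  refine ⟨((b₁.prod b₂).map F.orthogonalDecomposition.symm).reindex
    (Fintype.equivFinOfCardEq hcard), fun i => ?_⟩
  rcases h : (Fintype.equivFinOfCardEq hcard).symm i with j | j <;>
    simp [h, hb₁, hb₂]

end LinearMap.IsSymmetric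

section

variable {V E : Type*} [NormedAddCommGroup V] [InnerProductSpace ℝ V]
  [NormedAddCommGroup E] [InnerProductSpace ℝ E] {w : V →ₗ[ℝ] V →ₗ[ℝ] E} {v : V}

theorem Orthonormal.wedge_pairs {ι : Type*} [LinearOrder ι] {e : ι → V} (he : Orthonormal ℝ e)
    (hinner : ∀ a b c d : V, ⟪w a b, w c d⟫ = ⟪a, c⟫ * ⟪b, d⟫ - ⟪a, d⟫ * ⟪b, c⟫) :
    Orthonormal ℝ (fun p : {p : ι × ι // p.1 < p.2} => w (e p.1.1) (e p.1.2)) := by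
  rw [orthonormal_iff_ite] at he ⊢
  rintro ⟨⟨i, j⟩, hij⟩ ⟨⟨k, l⟩, hkl⟩
  simp only [hinner, he, Subtype.mk.injEq, Prod.mk.injEq]
  split_ifs <;> simp_all; order

theorem span_wedge_pairs_eq_top {ι : Type*} [LinearOrder ι] {e : ι → V}
    (he : Submodule.span ℝ (Set.range e) = ⊤) (halt : w.IsAlt)
    (hspan : Submodule.span ℝ {ξ : E | ∃ x y : V, ξ = w x y} = ⊤) :
    Submodule.span ℝ (Set.range (fun p : {p : ι × ι // p.1 < p.2} => w (e p.1.1) (e p.1.2)))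
      = ⊤ := by
  have himage : {ξ : E | ∃ x y : V, ξ = w x y} =
      Set.image2 (fun x y => w x y) (Submodule.span ℝ (Set.range e) : Set V)
        (Submodule.span ℝ (Set.range e)) := by
    rw [he]; ext ξ; simp [eq_comm]
  rw [eq_top_iff, ← hspan, himage, ← Submodule.map₂_eq_span_image2, Submodule.map₂_span_span,
    Submodule.span_le]
  rintro _ ⟨_, ⟨i, rfl⟩, _, ⟨j, rfl⟩, rfl⟩
  rcases lt_trichotomy i j with hij | rfl | hji
  · exact Submodule.subset_span ⟨⟨(i, j), hij⟩, rfl⟩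
  · simp [halt.self_eq_zero]
  · change w (e i) (e j) ∈ _
    rw [← halt.neg]
    exact Submodule.neg_mem _ (Submodule.subset_span ⟨⟨(j, i), hji⟩, rfl⟩)

theorem finrank_eq_choose_two [FiniteDimensional ℝ V] (halt : w.IsAlt)
    (hinner : ∀ a b c d : V, ⟪w a b, w c d⟫ = ⟪a, c⟫ * ⟪b, d⟫ - ⟪a, d⟫ * ⟪b, c⟫)
    (hspan : Submodule.span ℝ {ξ : E | ∃ x y : V, ξ = w x y} = ⊤) :
    finrank ℝ E = (finrank ℝ V).choose 2 := by
  let e := stdOrthonormalBasis ℝ V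
  have he : Submodule.span ℝ (Set.range e) = ⊤ := by simpa using e.toBasis.span_eq
  have hli := (e.orthonormal.wedge_pairs hinner).linearIndependent
  rw [← finrank_top, ← span_wedge_pairs_eq_top he halt hspan,
    finrank_span_eq_card hli, Fintype.card_subtype, Fintype.card_product_filter_lt,
    Fintype.card_fin]

theorem span_image2_orthogonal_le_orthogonal_map
    (hinner : ∀ a b c d : V, ⟪w a b, w c d⟫ = ⟪a, c⟫ * ⟪b, d⟫ - ⟪a, d⟫ * ⟪b, c⟫) :
    Submodule.span ℝ (Set.image2 (fun x y => w x y) (ℝ ∙ v)ᗮ (ℝ ∙ v)ᗮ) ≤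
      ((ℝ ∙ v)ᗮ.map (w v))ᗮ := by
  rw [Submodule.span_le]
  rintro _ ⟨u₁, hu₁, u₂, hu₂, rfl⟩ _ ⟨u, -, rfl⟩
  rw [SetLike.mem_coe, Submodule.mem_orthogonal_singleton_iff_inner_right] at hu₁ hu₂
  change ⟪w v u, w u₁ u₂⟫ = 0
  rw [hinner, hu₁, hu₂]
  ring

theorem apply_mem_map_sup_span_image2 (halt : w.IsAlt) (hv : ‖v‖ = 1) (x y : V) :
    w x y ∈ (ℝ ∙ v)ᗮ.map (w v) ⊔
      Submodule.span ℝ (Set.image2 (fun x y => w x y) (ℝ ∙ v)ᗮ (ℝ ∙ v)ᗮ) := by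
  have hproj : ∀ z : V, z - ⟪v, z⟫ • v ∈ (ℝ ∙ v)ᗮ := fun z => by
    rw [Submodule.mem_orthogonal_singleton_iff_inner_right, inner_sub_right,
      real_inner_smul_right, real_inner_self_eq_norm_sq, hv]
    ring
  have hdecomp : w x y = (⟪v, x⟫ • w v (y - ⟪v, y⟫ • v) - ⟪v, y⟫ • w v (x - ⟪v, x⟫ • v))
      + w (x - ⟪v, x⟫ • v) (y - ⟪v, y⟫ • v) := by
    simp only [map_sub, map_smul, LinearMap.sub_apply, LinearMap.smul_apply,
      halt.self_eq_zero, ← halt.neg v, smul_zero]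
    module
  rw [hdecomp]
  refine add_mem (Submodule.mem_sup_left (sub_mem ?_ ?_))
    (Submodule.mem_sup_right (Submodule.subset_span ⟨_, hproj x, _, hproj y, rfl⟩))
  · exact Submodule.smul_mem _ _ ⟨_, hproj y, rfl⟩
  · exact Submodule.smul_mem _ _ ⟨_, hproj x, rfl⟩

theorem orthogonal_map_eq_span_image2 (halt : w.IsAlt)
    (hinner : ∀ a b c d : V, ⟪w a b, w c d⟫ = ⟪a, c⟫ * ⟪b, d⟫ - ⟪a, d⟫ * ⟪b, c⟫)
    (hspan : Submodule.span ℝ {ξ : E | ∃ x y : V, ξ = w x y} = ⊤) (hv : ‖v‖ = 1) :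
    ((ℝ ∙ v)ᗮ.map (w v))ᗮ =
      Submodule.span ℝ (Set.image2 (fun x y => w x y) (ℝ ∙ v)ᗮ (ℝ ∙ v)ᗮ) := by
  have hsup : Codisjoint (Submodule.span ℝ (Set.image2 (fun x y => w x y) (ℝ ∙ v)ᗮ (ℝ ∙ v)ᗮ))
      ((ℝ ∙ v)ᗮ.map (w v)) := by
    rw [codisjoint_iff, sup_comm, eq_top_iff, ← hspan, Submodule.span_le]
    rintro _ ⟨x, y, rfl⟩
    exact apply_mem_map_sup_span_image2 halt hv x y
  exact ((le_iff_eq_of_codisjoint_of_disjoint hsup (Submodule.orthogonal_disjoint _)).mp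
    (span_image2_orthogonal_le_orthogonal_map hinner)).symm

end

/-- In a 4-dimensional real inner product space `V` (with `Λ²V` modelled by `E` and the
alternating map `w`), every bivector in `Λ²(v⊥)`, which is the orthogonal complement of
`v ∧ v⊥` for a unit vector `v`, is simple; consequently, if a symmetric endomorphism `W`
of `Λ²V` leaves `v ∧ v⊥` invariant, then `Λ²V` admits a basis of eigenvectors of `W`
that are simple bivectors. -/
theorem dim4_simple_eigenbasis
    {V E : Type*} [NormedAddCommGroup V] [InnerProductSpace ℝ V]
    [NormedAddCommGroup E] [InnerProductSpace ℝ E]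
    [FiniteDimensional ℝ V] [FiniteDimensional ℝ E]
    (hV : Module.finrank ℝ V = 4)
    (w : V →ₗ[ℝ] V →ₗ[ℝ] E)
    (halt : ∀ x : V, w x x = 0)
    (hinner : ∀ a b c d : V, ⟪w a b, w c d⟫ = ⟪a, c⟫ * ⟪b, d⟫ - ⟪a, d⟫ * ⟪b, c⟫)
    (hspan : Submodule.span ℝ {ξ : E | ∃ x y : V, ξ = w x y} = ⊤)
    (W : E →ₗ[ℝ] E) (hW : W.IsSymmetric)
    (v : V) (hv : ‖v‖ = 1)
    (hinv : ∀ ξ ∈ Submodule.span ℝ {ξ : E | ∃ u : V, ⟪v, u⟫ = 0 ∧ ξ = w v u},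
      W ξ ∈ Submodule.span ℝ {ξ : E | ∃ u : V, ⟪v, u⟫ = 0 ∧ ξ = w v u}) :
    (∀ ξ ∈ Submodule.span ℝ {ξ : E | ∃ u₁ u₂ : V, ⟪v, u₁⟫ = 0 ∧ ⟪v, u₂⟫ = 0 ∧ ξ = w u₁ u₂},
      ∃ x y : V, ξ = w x y) ∧
    ∃ s : Fin 6 → E, LinearIndependent ℝ s ∧ Submodule.span ℝ (Set.range s) = ⊤ ∧
      ∀ i, (∃ x y : V, s i = w x y) ∧ ∃ μ : ℝ, W (s i) = μ • s i := by
  have hS₁ : {ξ : E | ∃ u : V, ⟪v, u⟫ = 0 ∧ ξ = w v u} = w v '' (ℝ ∙ v)ᗮ := by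
    ext; simp [Submodule.mem_orthogonal_singleton_iff_inner_right, eq_comm]
  have hS₂ : {ξ : E | ∃ u₁ u₂ : V, ⟪v, u₁⟫ = 0 ∧ ⟪v, u₂⟫ = 0 ∧ ξ = w u₁ u₂} =
      Set.image2 (fun x y => w x y) (ℝ ∙ v)ᗮ (ℝ ∙ v)ᗮ := by
    ext; simp [Submodule.mem_orthogonal_singleton_iff_inner_right, eq_comm]
  rw [hS₁, Submodule.span_image, Submodule.span_eq] at hinv
  have hv₀ : v ≠ 0 := by rintro rfl; simp at hv
  have : Fact (finrank ℝ V = 3 + 1) := ⟨hV⟩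
  have hsimple : ∀ ξ ∈ Submodule.span ℝ (Set.image2 (fun x y => w x y) (ℝ ∙ v)ᗮ (ℝ ∙ v)ᗮ),
      ∃ x y, ξ = w x y := fun ξ =>
    LinearMap.exists_apply_eq_of_mem_span_image2 halt
      (Submodule.finrank_orthogonal_span_singleton (n := 3) hv₀)
  obtain ⟨b, hb⟩ := hW.exists_orthonormalBasis_eigenvectors_mem_or_mem_orthogonal hinv
  have hE : finrank ℝ E = 6 := by rw [finrank_eq_choose_two halt hinner hspan, hV]; rfl
  let s := b.reindex (finCongr hE)
  refine ⟨hS₂ ▸ hsimple, s, s.orthonormal.linearIndependent,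
    by simpa using s.toBasis.span_eq, fun i => ?_⟩
  rw [b.reindex_apply]
  refine ⟨?_, (hb _).2⟩
  rcases (hb _).1 with hF | hG
  · obtain ⟨u, -, hu⟩ := Submodule.mem_map.mp hF
    exact ⟨v, u, hu.symm⟩
  · exact hsimple _ (orthogonal_map_eq_span_image2 halt hinner hspan hv ▸ hG)
end

section
/- Let W be a symmetric endomorphism of Λ²V for V a 4-dimensional oriented real inner product space, such that W preserves both Λ⁺ and Λ⁻ (i.e., W = W⁺ ⊕ W⁻). If all six eigenvalues of W are distinct, then no eigenvector of W is a simple bivector, and consequently there is no unit vector v ∈ V with W(v ∧ v⊥) ⊆ v ∧ v⊥. -/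
open scoped RealInnerProductSpace

/-!
The Hodge star permutes the basis bivectors `eᵢ ∧ eⱼ` up to sign, so it is an involution and
`Λ²V = Λ⁺ ⊕ Λ⁻`. A simple bivector `ξ = x ∧ y` satisfies `⟪⋆ξ, ξ⟫ = quadDet x y x y = 0`, so
`ξ + ⋆ξ ∈ Λ⁺` and `ξ - ⋆ξ ∈ Λ⁻` are both nonzero. If `ξ` is an eigenvector of `W`, then, since
`W` preserves `Λ⁺` and `Λ⁻`, both are eigenvectors for the same eigenvalue; but distinct
eigenvalues make every eigenspace a line, which cannot meet both `Λ⁺` and `Λ⁻`.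

For a unit vector `v`, the space `v ∧ v⊥ = {v ∧ u | u ⊥ v}` is nonzero and consists of simple
bivectors; if it were `W`-invariant, the symmetric `W` would have an eigenvector in it.
-/

/-- The pairing `⟨a∧b∧c∧d, e₁∧e₂∧e₃∧e₄⟩`: the determinant of the matrix of coordinates
of `a, b, c, d` in the oriented orthonormal basis `e`. -/
noncomputable def quadDet {V : Type*} [NormedAddCommGroup V] [InnerProductSpace ℝ V]
    (e : OrthonormalBasis (Fin 4) ℝ V) (a b c d : V) : ℝ :=
  Matrix.det (Matrix.of
    ![fun j => ⟪e j, a⟫, fun j => ⟪e j, b⟫, fun j => ⟪e j, c⟫, fun j => ⟪e j, d⟫])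

section DistinctEigenvalues

variable {K M ι : Type*} [Field K] [AddCommGroup M] [Module K M] [Fintype ι]
  {W : Module.End K M} {μ : ι → K} {s : ι → M}

theorem LinearIndependent.coeff_eq_zero_of_apply_eq_smul (hli : LinearIndependent K s)
    (hs : ∀ i, W (s i) = μ i • s i) {c : ι → K} {ν : K}
    (h : W (∑ i, c i • s i) = ν • ∑ i, c i • s i) {i : ι} (hi : μ i ≠ ν) : c i = 0 := by
  have hzero : ∑ i, ((μ i - ν) * c i) • s i = 0 :=
    calc ∑ i, ((μ i - ν) * c i) • s i = W (∑ i, c i • s i) - ν • ∑ i, c i • s i := by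
          simp only [map_sum, map_smul, hs, Finset.smul_sum, smul_smul, ← Finset.sum_sub_distrib,
            ← sub_smul, sub_mul, mul_comm (c _)]
      _ = 0 := by rw [h, sub_self]
  have := Fintype.linearIndependent_iff.mp hli _ hzero i
  exact (mul_eq_zero.mp this).resolve_left (sub_ne_zero.mpr hi)

theorem exists_eq_smul_of_apply_eq_smul (hμ : Function.Injective μ)
    (hs : ∀ i, s i ≠ 0 ∧ W (s i) = μ i • s i) (hspan : Submodule.span K (Set.range s) = ⊤)
    {x y : M} {ν : K} (hx : W x = ν • x) (hy : W y = ν • y) (hy0 : y ≠ 0) :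
    ∃ c : K, x = c • y := by
  have hli : LinearIndependent K s := Module.End.eigenvectors_linearIndependent' W μ hμ s
    fun i => ⟨Module.End.mem_eigenspace_iff.mpr (hs i).2, (hs i).1⟩
  have hW : ∀ i, W (s i) = μ i • s i := fun i => (hs i).2
  have hcoeff : ∀ z : M, ∃ c : ι → K, ∑ i, c i • s i = z := fun z =>
    (Submodule.mem_span_range_iff_exists_fun K).mp (hspan ▸ Submodule.mem_top)
  obtain ⟨a, rfl⟩ := hcoeff x
  obtain ⟨b, rfl⟩ := hcoeff y
  obtain ⟨j, hbj⟩ : ∃ j, b j ≠ 0 := by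
    by_contra! hb
    exact hy0 (by simp [hb])
  have hj : μ j = ν := by_contra fun hj => hbj (hli.coeff_eq_zero_of_apply_eq_smul hW hy hj)
  have single : ∀ c : ι → K, W (∑ i, c i • s i) = ν • ∑ i, c i • s i →
      ∑ i, c i • s i = c j • s j := fun c hc =>
    Finset.sum_eq_single j (fun i _ hij => by
      rw [hli.coeff_eq_zero_of_apply_eq_smul hW hc (hj ▸ hμ.ne hij), zero_smul])
      (by simp)
  refine ⟨a j / b j, ?_⟩
  rw [single a hx, single b hy, smul_smul, div_mul_cancel₀ _ hbj]

end DistinctEigenvalues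

theorem apply_eq_smul_of_apply_add_eq_smul {R M : Type*} [CommRing R] [AddCommGroup M]
    [Module R M] {f : Module.End R M} {A B : Submodule R M} (hA : ∀ x ∈ A, f x ∈ A)
    (hB : ∀ x ∈ B, f x ∈ B) (hAB : Disjoint A B) {a b : M} (ha : a ∈ A) (hb : b ∈ B) {ν : R}
    (h : f (a + b) = ν • (a + b)) : f a = ν • a ∧ f b = ν • b := by
  have hdiff : f a - ν • a = ν • b - f b := by
    rw [map_add, smul_add] at h
    linear_combination (norm := module) h
  have hzero : f a - ν • a = 0 := Submodule.disjoint_def.mp hAB _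
    (A.sub_mem (hA a ha) (A.smul_mem ν ha)) (hdiff ▸ B.sub_mem (B.smul_mem ν hb) (hB b hb))
  refine ⟨sub_eq_zero.mp hzero, (sub_eq_zero.mp ?_).symm⟩
  rwa [← hdiff]

theorem disjoint_eigenspace_one_neg_one {K M : Type*} [Field K] [CharZero K] [AddCommGroup M]
    [Module K M] (σ : Module.End K M) : Disjoint (σ.eigenspace 1) (σ.eigenspace (-1)) :=
  Module.End.eigenspaces_iSupIndep σ |>.pairwiseDisjoint (by norm_num)

section Involution

variable {E : Type*} [NormedAddCommGroup E] [InnerProductSpace ℝ E] {σ W : Module.End ℝ E}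

theorem inner_apply_self_ne_zero_of_apply_eq_smul (hσ : ∀ ξ, σ (σ ξ) = ξ)
    (hWp : ∀ ξ ∈ σ.eigenspace 1, W ξ ∈ σ.eigenspace 1)
    (hWm : ∀ ξ ∈ σ.eigenspace (-1), W ξ ∈ σ.eigenspace (-1))
    (hW : ∀ (x y : E) (ν : ℝ), W x = ν • x → W y = ν • y → y ≠ 0 → ∃ c : ℝ, x = c • y)
    {ξ : E} {ν : ℝ} (hξ : ξ ≠ 0) (hWξ : W ξ = ν • ξ) : ⟪σ ξ, ξ⟫ ≠ 0 := by
  intro horth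
  have hp : ξ + σ ξ ∈ σ.eigenspace 1 := Module.End.mem_eigenspace_iff.mpr <| by
    rw [map_add, hσ, one_smul, add_comm]
  have hm : ξ - σ ξ ∈ σ.eigenspace (-1) := Module.End.mem_eigenspace_iff.mpr <| by
    rw [map_sub, hσ, neg_one_smul, neg_sub]
  have hsum : W ((ξ + σ ξ) + (ξ - σ ξ)) = ν • ((ξ + σ ξ) + (ξ - σ ξ)) := by
    rw [add_add_sub_cancel, ← two_smul ℝ, map_smul, hWξ, smul_comm]
  obtain ⟨hWp', hWm'⟩ :=
    apply_eq_smul_of_apply_add_eq_smul hWp hWm (disjoint_eigenspace_one_neg_one σ) hp hm hsum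
  have hm0 : ξ - σ ξ ≠ 0 := by
    intro h
    rw [← sub_eq_zero.mp h, inner_self_eq_zero] at horth
    exact hξ horth
  obtain ⟨c, hc⟩ := hW _ _ ν hWp' hWm' hm0
  have hp0 : ξ + σ ξ = 0 := Submodule.disjoint_def.mp (disjoint_eigenspace_one_neg_one σ) _ hp
    (hc ▸ Submodule.smul_mem _ c hm)
  rw [← neg_eq_of_add_eq_zero_right hp0, inner_neg_left, neg_eq_zero, inner_self_eq_zero] at horth
  exact hξ horth

end Involution

theorem quadDet_self {V : Type*} [NormedAddCommGroup V] [InnerProductSpace ℝ V]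
    (e : OrthonormalBasis (Fin 4) ℝ V) (a b : V) : quadDet e a b a b = 0 :=
  Matrix.det_zero_of_row_eq (i := 0) (j := 2) (by decide) rfl

section Hodge

variable {V E : Type*} [NormedAddCommGroup V] [InnerProductSpace ℝ V]
  [NormedAddCommGroup E] [InnerProductSpace ℝ E] {w : V →ₗ[ℝ] V →ₗ[ℝ] E}

theorem wedge_swap (halt : ∀ x : V, w x x = 0) (x y : V) : w y x = -w x y := by
  have := halt (x + y)
  simp only [map_add, LinearMap.add_apply, halt, zero_add, add_zero] at this
  exact eq_neg_of_add_eq_zero_left this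

theorem eq_zero_of_forall_inner_wedge_eq_zero
    (hspan : Submodule.span ℝ {ξ : E | ∃ x y : V, ξ = w x y} = ⊤) {η : E}
    (h : ∀ c d : V, ⟪η, w c d⟫ = 0) : η = 0 := by
  have : innerₛₗ ℝ η = 0 := LinearMap.ext_on hspan <| by
    rintro _ ⟨c, d, rfl⟩
    exact h c d
  exact inner_self_eq_zero.mp (LinearMap.congr_fun this η)

variable {hodge : E →ₗ[ℝ] E} (e : OrthonormalBasis (Fin 4) ℝ V)

theorem hodge_wedge_eq (hspan : Submodule.span ℝ {ξ : E | ∃ x y : V, ξ = w x y} = ⊤)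
    (hhodge : ∀ a b c d : V, ⟪hodge (w a b), w c d⟫ = quadDet e a b c d) {a b : V} {ζ : E}
    (h : ∀ c d : V, quadDet e a b c d = ⟪ζ, w c d⟫) : hodge (w a b) = ζ :=
  sub_eq_zero.mp <| eq_zero_of_forall_inner_wedge_eq_zero hspan fun c d => by
    rw [inner_sub_left, hhodge, h, sub_self]

theorem hodge_hodge_wedge_of_lt
    (hinner : ∀ a b c d : V, ⟪w a b, w c d⟫ = ⟪a, c⟫ * ⟪b, d⟫ - ⟪a, d⟫ * ⟪b, c⟫)
    (hspan : Submodule.span ℝ {ξ : E | ∃ x y : V, ξ = w x y} = ⊤)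
    (hhodge : ∀ a b c d : V, ⟪hodge (w a b), w c d⟫ = quadDet e a b c d) {i j : Fin 4}
    (hij : i < j) : hodge (hodge (w (e i) (e j))) = w (e i) (e j) := by
  obtain ⟨h01, h02, h03, h12, h13, h23⟩ :
      hodge (w (e 0) (e 1)) = w (e 2) (e 3) ∧ hodge (w (e 0) (e 2)) = -w (e 1) (e 3) ∧
      hodge (w (e 0) (e 3)) = w (e 1) (e 2) ∧ hodge (w (e 1) (e 2)) = w (e 0) (e 3) ∧
      hodge (w (e 1) (e 3)) = -w (e 0) (e 2) ∧ hodge (w (e 2) (e 3)) = w (e 0) (e 1) := by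
    refine ⟨?_, ?_, ?_, ?_, ?_, ?_⟩ <;> refine hodge_wedge_eq e hspan hhodge fun c d => ?_ <;>
      simp [quadDet, hinner, Matrix.det_succ_row_zero, Fin.sum_univ_succ, Fin.succAbove,
        orthonormal_iff_ite.mp e.orthonormal] <;> ring
  fin_cases i <;> fin_cases j <;> simp_all

theorem hodge_hodge (halt : ∀ x : V, w x x = 0)
    (hinner : ∀ a b c d : V, ⟪w a b, w c d⟫ = ⟪a, c⟫ * ⟪b, d⟫ - ⟪a, d⟫ * ⟪b, c⟫)
    (hspan : Submodule.span ℝ {ξ : E | ∃ x y : V, ξ = w x y} = ⊤)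
    (hhodge : ∀ a b c d : V, ⟪hodge (w a b), w c d⟫ = quadDet e a b c d) (ξ : E) :
    hodge (hodge ξ) = ξ := by
  have hwedge : w.compr₂ (hodge ∘ₗ hodge) = w := by
    refine LinearMap.ext_basis e.toBasis e.toBasis fun i j => ?_
    simp only [LinearMap.compr₂_apply, LinearMap.comp_apply, OrthonormalBasis.coe_toBasis]
    rcases lt_trichotomy i j with hij | rfl | hij
    · exact hodge_hodge_wedge_of_lt e hinner hspan hhodge hij
    · simp [halt]
    · rw [wedge_swap halt, map_neg, map_neg, hodge_hodge_wedge_of_lt e hinner hspan hhodge hij]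
  have : hodge ∘ₗ hodge = LinearMap.id := LinearMap.ext_on hspan <| by
    rintro _ ⟨x, y, rfl⟩
    exact LinearMap.congr_fun₂ hwedge x y
  exact LinearMap.congr_fun this ξ

end Hodge

theorem span_setOf_inner_eq_zero_eq_map {V E : Type*} [NormedAddCommGroup V]
    [InnerProductSpace ℝ V] [AddCommGroup E] [Module ℝ E] (f : V →ₗ[ℝ] E) (v : V) :
    Submodule.span ℝ {ξ : E | ∃ u : V, ⟪v, u⟫ = 0 ∧ ξ = f u} = (ℝ ∙ v)ᗮ.map f := by
  have : {ξ : E | ∃ u : V, ⟪v, u⟫ = 0 ∧ ξ = f u} = f '' (ℝ ∙ v)ᗮ := by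
    ext ξ
    simp [Submodule.mem_orthogonal_singleton_iff_inner_right, eq_comm]
  rw [this, Submodule.span_image, Submodule.span_eq]

theorem LinearMap.IsSymmetric.exists_eigenvector_mem {E : Type*} [NormedAddCommGroup E]
    [InnerProductSpace ℝ E] [FiniteDimensional ℝ E] {T : E →ₗ[ℝ] E} (hT : T.IsSymmetric)
    {F : Submodule ℝ E} (hF : ∀ x ∈ F, T x ∈ F) (hF0 : F ≠ ⊥) :
    ∃ x ∈ F, x ≠ 0 ∧ ∃ ν : ℝ, T x = ν • x := by
  have : Nontrivial F := Submodule.nontrivial_iff_ne_bot.mpr hF0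
  obtain ⟨x, hx, hx0⟩ :=
    (hT.restrict_invariant hF).hasEigenvalue_iSup_of_finiteDimensional.exists_hasEigenvector
  exact ⟨x, x.2, fun h => hx0 (Subtype.ext h), _,
    congrArg Subtype.val (Module.End.mem_eigenspace_iff.mp hx)⟩

theorem exists_ne_zero_inner_eq_zero {V : Type*} [NormedAddCommGroup V] [InnerProductSpace ℝ V]
    (hV : 2 ≤ Module.finrank ℝ V) (v : V) :
    ∃ u : V, u ≠ 0 ∧ ⟪v, u⟫ = 0 := by
  have : (ℝ ∙ v)ᗮ ≠ ⊥ := by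
    rw [Ne, Submodule.orthogonal_eq_bot_iff]
    intro h
    have := finrank_span_le_card (R := ℝ) ({v} : Set V)
    rw [h, finrank_top, Set.toFinset_singleton, Finset.card_singleton] at this
    omega
  obtain ⟨u, hu, hu0⟩ := Submodule.exists_mem_ne_zero_of_ne_bot this
  exact ⟨u, hu0, Submodule.mem_orthogonal_singleton_iff_inner_right.mp hu⟩

theorem distinct_eigenvalues_no_simple_eigenvector_no_eigenflag_general
    {V E : Type*} [NormedAddCommGroup V] [InnerProductSpace ℝ V]
    [NormedAddCommGroup E] [InnerProductSpace ℝ E]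
    [FiniteDimensional ℝ E]
    (e : OrthonormalBasis (Fin 4) ℝ V)
    (w : V →ₗ[ℝ] V →ₗ[ℝ] E)
    (halt : ∀ x : V, w x x = 0)
    (hinner : ∀ a b c d : V, ⟪w a b, w c d⟫ = ⟪a, c⟫ * ⟪b, d⟫ - ⟪a, d⟫ * ⟪b, c⟫)
    (hspan : Submodule.span ℝ {ξ : E | ∃ x y : V, ξ = w x y} = ⊤)
    (hodge : E →ₗ[ℝ] E)
    (hhodge : ∀ a b c d : V, ⟪hodge (w a b), w c d⟫ = quadDet e a b c d)
    (W : E →ₗ[ℝ] E) (hW : W.IsSymmetric)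
    (hWp : ∀ ξ ∈ Module.End.eigenspace hodge (1 : ℝ),
      W ξ ∈ Module.End.eigenspace hodge (1 : ℝ))
    (hWm : ∀ ξ ∈ Module.End.eigenspace hodge (-1 : ℝ),
      W ξ ∈ Module.End.eigenspace hodge (-1 : ℝ))
    (hdistinct : ∃ μ : Fin 6 → ℝ, Function.Injective μ ∧
      ∃ s : Fin 6 → E, (∀ i, s i ≠ 0 ∧ W (s i) = μ i • s i) ∧
        Submodule.span ℝ (Set.range s) = ⊤) :
    (∀ (ξ : E) (μ : ℝ), ξ ≠ 0 → W ξ = μ • ξ → ¬ ∃ x y : V, ξ = w x y) ∧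
    ¬ ∃ v : V, ‖v‖ = 1 ∧
      ∀ ξ ∈ Submodule.span ℝ {ξ : E | ∃ u : V, ⟪v, u⟫ = 0 ∧ ξ = w v u},
        W ξ ∈ Submodule.span ℝ {ξ : E | ∃ u : V, ⟪v, u⟫ = 0 ∧ ξ = w v u} := by
  obtain ⟨μ, hμ, s, hs, hs_span⟩ := hdistinct
  have hstar := hodge_hodge e halt hinner hspan hhodge
  have not_simple : ∀ (ξ : E) (ν : ℝ), ξ ≠ 0 → W ξ = ν • ξ → ¬ ∃ x y : V, ξ = w x y := by
    rintro ξ ν hξ hWξ ⟨x, y, rfl⟩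
    refine inner_apply_self_ne_zero_of_apply_eq_smul hstar hWp hWm
      (fun _ _ _ => exists_eq_smul_of_apply_eq_smul hμ hs hs_span) hξ hWξ ?_
    rw [hhodge, quadDet_self]
  refine ⟨not_simple, ?_⟩
  rintro ⟨v, hv, hinv⟩
  have hV : Module.finrank ℝ V = 4 := by
    rw [Module.finrank_eq_card_basis e.toBasis, Fintype.card_fin]
  obtain ⟨u, hu0, hvu⟩ := exists_ne_zero_inner_eq_zero (by omega) v
  have hF0 : Submodule.span ℝ {ξ : E | ∃ u : V, ⟪v, u⟫ = 0 ∧ ξ = w v u} ≠ ⊥ := by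
    refine Submodule.ne_bot_iff _ |>.mpr ⟨w v u, Submodule.subset_span ⟨u, hvu, rfl⟩, fun h => ?_⟩
    have := hinner v u v u
    rw [h, inner_zero_left, hvu, real_inner_self_eq_norm_sq v, hv] at this
    exact hu0 (by simpa using this.symm)
  obtain ⟨ξ, hξF, hξ0, ν, hWξ⟩ := hW.exists_eigenvector_mem hinv hF0
  rw [span_setOf_inner_eq_zero_eq_map] at hξF
  obtain ⟨u', -, rfl⟩ := hξF
  exact not_simple _ ν hξ0 hWξ ⟨v, u', rfl⟩

/-- Let `W` be a symmetric endomorphism of `Λ²V`, for `V` a 4-dimensional oriented real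
inner product space (with `Λ²V` modelled by `E` via the alternating map `w` and Hodge
star `hodge`), preserving both `Λ⁺` and `Λ⁻`.  If all six eigenvalues of `W` are
distinct, then no eigenvector of `W` is a simple bivector, and consequently there is no
unit vector `v ∈ V` with `W(v ∧ v⊥) ⊆ v ∧ v⊥`. -/
theorem distinct_eigenvalues_no_simple_eigenvector_no_eigenflag
    {V E : Type*} [NormedAddCommGroup V] [InnerProductSpace ℝ V]
    [NormedAddCommGroup E] [InnerProductSpace ℝ E]
    [FiniteDimensional ℝ V] [FiniteDimensional ℝ E]
    (e : OrthonormalBasis (Fin 4) ℝ V)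
    (w : V →ₗ[ℝ] V →ₗ[ℝ] E)
    (halt : ∀ x : V, w x x = 0)
    (hinner : ∀ a b c d : V, ⟪w a b, w c d⟫ = ⟪a, c⟫ * ⟪b, d⟫ - ⟪a, d⟫ * ⟪b, c⟫)
    (hspan : Submodule.span ℝ {ξ : E | ∃ x y : V, ξ = w x y} = ⊤)
    (hodge : E →ₗ[ℝ] E)
    (hhodge : ∀ a b c d : V, ⟪hodge (w a b), w c d⟫ = quadDet e a b c d)
    (W : E →ₗ[ℝ] E) (hW : W.IsSymmetric)
    (hWp : ∀ ξ ∈ Module.End.eigenspace hodge (1 : ℝ),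
      W ξ ∈ Module.End.eigenspace hodge (1 : ℝ))
    (hWm : ∀ ξ ∈ Module.End.eigenspace hodge (-1 : ℝ),
      W ξ ∈ Module.End.eigenspace hodge (-1 : ℝ))
    (hdistinct : ∃ μ : Fin 6 → ℝ, Function.Injective μ ∧
      ∃ s : Fin 6 → E, (∀ i, s i ≠ 0 ∧ W (s i) = μ i • s i) ∧
        Submodule.span ℝ (Set.range s) = ⊤) :
    (∀ (ξ : E) (μ : ℝ), ξ ≠ 0 → W ξ = μ • ξ → ¬ ∃ x y : V, ξ = w x y) ∧
    ¬ ∃ v : V, ‖v‖ = 1 ∧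
      ∀ ξ ∈ Submodule.span ℝ {ξ : E | ∃ u : V, ⟪v, u⟫ = 0 ∧ ξ = w v u},
        W ξ ∈ Submodule.span ℝ {ξ : E | ∃ u : V, ⟪v, u⟫ = 0 ∧ ξ = w v u} :=
  distinct_eigenvalues_no_simple_eigenvector_no_eigenflag_general e w halt hinner hspan hodge hhodge
    W hW hWp hWm hdistinct
end

section
/- Let V be a 4-dimensional oriented real inner product space, and let W be a self-adjoint endomorphism of Λ²V preserving Λ⁺ and Λ⁻ and satisfying the eigenflag condition: there is a unit vector v with W(v ∧ v⊥) ⊆ v ∧ v⊥. Then in a suitable oriented orthonormal basis e₁ = v, e₂, e₃, e₄, W is diagonal with W(e₁∧eⱼ) = λ₁ⱼ e₁∧eⱼ, W(e₃∧e₄) = λ₁₂ e₃∧e₄, W(e₂∧e₄) = λ₁₃ e₂∧e₄, W(e₂∧e₃) = λ₁₄ e₂∧e₃; i.e., W⁺ and W⁻ have the same eigenvalues (λ₁₂, λ₁₃, λ₁₄). -/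
open scoped RealInnerProductSpace

/-!
The eigenflag condition says that `v ∧ v⊥` is `W`-invariant; since `u ↦ v ∧ u` is an isometry
from `v⊥` onto it, `W` is diagonal there in a basis `v ∧ f₂, v ∧ f₃, v ∧ f₄` with `f₂, f₃, f₄`
orthonormal in `v⊥`, and replacing `f₄` by `-f₄` if necessary makes `v, f₂, f₃, f₄` oriented.
In an oriented orthonormal basis the Hodge star exchanges `f₁ ∧ f₂ ↔ f₃ ∧ f₄`,
`f₁ ∧ f₃ ↔ -f₂ ∧ f₄`, `f₁ ∧ f₄ ↔ f₂ ∧ f₃`. As `W` preserves both eigenspaces of the star, it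
commutes with it on such a pair, so `⋆(f₁ ∧ fⱼ)` is an eigenvector with the same eigenvalue.
-/

open Module Equiv

section Orientation
variable {V : Type*} [NormedAddCommGroup V] [InnerProductSpace ℝ V]

theorem OrthonormalBasis.det_of_inner_eq_toBasis_det {ι : Type*} [Fintype ι] [DecidableEq ι]
    (e f : OrthonormalBasis ι ℝ V) :
    Matrix.det (Matrix.of fun i j => ⟪e i, f j⟫) = e.toBasis.det f := by
  rw [Basis.det_apply]
  congr 1
  ext i j
  simp [Basis.toMatrix_apply, OrthonormalBasis.repr_apply_apply]

theorem quadDet_eq_toBasis_det (e : OrthonormalBasis (Fin 4) ℝ V) (a b c d : V) :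
    quadDet e a b c d = e.toBasis.det ![a, b, c, d] := by
  rw [quadDet, Basis.det_apply, ← Matrix.det_transpose]
  congr 1
  ext i j
  fin_cases j <;> simp [Basis.toMatrix_apply, OrthonormalBasis.repr_apply_apply]

theorem quadDet_eq_det_mul_quadDet (e f : OrthonormalBasis (Fin 4) ℝ V) (a b c d : V) :
    quadDet e a b c d = e.toBasis.det f * quadDet f a b c d := by
  rw [quadDet_eq_toBasis_det, quadDet_eq_toBasis_det]
  conv_lhs => rw [AlternatingMap.eq_smul_basis_det f.toBasis e.toBasis.det]
  simp

theorem quadDet_apply_zero_one (f : OrthonormalBasis (Fin 4) ℝ V) (c d : V) :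
    quadDet f (f 0) (f 1) c d = ⟪f 2, c⟫ * ⟪f 3, d⟫ - ⟪f 2, d⟫ * ⟪f 3, c⟫ := by
  have hf := orthonormal_iff_ite.mp f.orthonormal
  simp [quadDet, Matrix.det_succ_row_zero, Fin.sum_univ_succ, Fin.succAbove, hf]
  ring

theorem OrthonormalBasis.exists_flip_det_eq_one {ι : Type*} [Fintype ι] [DecidableEq ι]
    (e f : OrthonormalBasis ι ℝ V) (k : ι) :
    ∃ f' : OrthonormalBasis ι ℝ V, e.toBasis.det f' = 1 ∧ (∀ i ≠ k, f' i = f i) ∧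
      (f' k = f k ∨ f' k = -f k) := by
  rcases e.det_to_matrix_orthonormalBasis_real f with hf | hf
  · exact ⟨f, hf, fun _ _ => rfl, Or.inl rfl⟩
  let u : ι → ℝˣ := Function.update 1 k (-1)
  have hflip : ∀ i, f.toBasis.unitsSMul u i = f i ∨ f.toBasis.unitsSMul u i = -f i := by
    intro i
    by_cases hi : i = k
    · subst hi; simp [u, Basis.unitsSMul_apply]
    · simp [u, Basis.unitsSMul_apply, hi]
  have horth : Orthonormal ℝ (f.toBasis.unitsSMul u) :=
    f.orthonormal.orthonormal_of_forall_eq_or_eq_neg hflip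
  refine ⟨(f.toBasis.unitsSMul u).toOrthonormalBasis horth, ?_, fun i hi => ?_, ?_⟩
  · rw [Basis.coe_toOrthonormalBasis, ← e.toBasis.det_mul_det f.toBasis,
      OrthonormalBasis.coe_toBasis, hf, Basis.det_unitsSMul_self, ← Units.coe_prod,
      Finset.prod_update_of_mem (Finset.mem_univ k)]
    simp
  · simp [u, Basis.unitsSMul_apply, hi]
  · simp [u, Basis.unitsSMul_apply]

theorem exists_orthonormalBasis_fin_cons [FiniteDimensional ℝ V] {v : V} (hv : ‖v‖ = 1)
    {n : ℕ} (b : OrthonormalBasis (Fin n) ℝ (ℝ ∙ v)ᗮ) :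
    ∃ f : OrthonormalBasis (Fin (n + 1)) ℝ V, f 0 = v ∧ ∀ i, f i.succ = b i := by
  have horth : Orthonormal ℝ (Fin.cons v fun i => (b i : V) : Fin (n + 1) → V) := by
    have hb := orthonormal_iff_ite.mp b.orthonormal
    have hvb : ∀ i, ⟪v, (b i : V)⟫ = 0 := fun i =>
      Submodule.mem_orthogonal_singleton_iff_inner_right.mp (b i).2
    rw [orthonormal_iff_ite]
    intro i j
    cases i using Fin.cases <;> cases j using Fin.cases <;>
      simp [hvb, real_inner_comm v, ← Submodule.coe_inner, hb, hv, (Fin.succ_ne_zero _).symm]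
  have hcard : Fintype.card (Fin (n + 1)) = finrank ℝ V := by
    rw [Fintype.card_fin, ← (ℝ ∙ v).finrank_add_finrank_orthogonal,
      finrank_span_singleton (norm_ne_zero_iff.mp (hv ▸ one_ne_zero)),
      finrank_eq_card_basis b.toBasis, Fintype.card_fin, add_comm]
  refine ⟨(basisOfOrthonormalOfCardEqFinrank horth hcard).toOrthonormalBasis
    (by simpa using horth), ?_, fun i => ?_⟩ <;> simp

end Orientation

theorem LinearMap.IsSymmetric.exists_orthonormalBasis_eigen_of_mapsTo_range
    {K E : Type*} [NormedAddCommGroup K] [InnerProductSpace ℝ K] [FiniteDimensional ℝ K]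
    [NormedAddCommGroup E] [InnerProductSpace ℝ E] {W : E →ₗ[ℝ] E} (hW : W.IsSymmetric)
    (ι : K →ₗᵢ[ℝ] E)
    (hinv : ∀ ξ ∈ LinearMap.range ι.toLinearMap, W ξ ∈ LinearMap.range ι.toLinearMap)
    {n : ℕ} (hn : finrank ℝ K = n) :
    ∃ (b : OrthonormalBasis (Fin n) ℝ K) (μ : Fin n → ℝ), ∀ i, W (ι (b i)) = μ i • ι (b i) := by
  let T : K →ₗ[ℝ] K := (LinearEquiv.ofInjective ι.toLinearMap ι.injective).symm ∘ₗ
    (W ∘ₗ ι.toLinearMap).codRestrict _ fun k => hinv _ ⟨k, rfl⟩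
  have hT : ∀ k, ι (T k) = W (ι k) := fun k =>
    congrArg Subtype.val ((LinearEquiv.ofInjective ι.toLinearMap ι.injective).apply_symm_apply _)
  have hTsym : T.IsSymmetric := fun a b => by
    rw [← ι.inner_map_map, hT, ← ι.inner_map_map a, hT, hW]
  refine ⟨hTsym.eigenvectorBasis hn, hTsym.eigenvalues hn, fun i => ?_⟩
  rw [← hT, hTsym.apply_eigenvectorBasis, map_smul]
  rfl

open Module.End in
theorem apply_eq_smul_of_swap {E : Type*} [AddCommGroup E] [Module ℝ E]
    {hodge W : E →ₗ[ℝ] E}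
    (hWp : ∀ ξ ∈ eigenspace hodge (1 : ℝ), W ξ ∈ eigenspace hodge (1 : ℝ))
    (hWm : ∀ ξ ∈ eigenspace hodge (-1 : ℝ), W ξ ∈ eigenspace hodge (-1 : ℝ))
    {ξ η : E} {l : ℝ} (h₁ : hodge ξ = η) (h₂ : hodge η = ξ) (hl : W ξ = l • ξ) :
    W η = l • η := by
  have hp := mem_eigenspace_iff.mp <| hWp (ξ + η) <| mem_eigenspace_iff.mpr <| by
    rw [map_add, h₁, h₂, one_smul, add_comm]
  have hm := mem_eigenspace_iff.mp <| hWm (ξ - η) <| mem_eigenspace_iff.mpr <| by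
    rw [map_sub, h₁, h₂]; module
  have hcomm : hodge (W ξ) = W η := by
    refine smul_right_injective E (two_ne_zero (α := ℝ)) ?_
    calc (2 : ℝ) • hodge (W ξ) = hodge (W (ξ + η) + W (ξ - η)) := by
          simp only [map_add, map_sub]; module
      _ = W (ξ + η) - W (ξ - η) := by rw [map_add, hp, hm]; module
      _ = (2 : ℝ) • W η := by simp only [map_add, map_sub]; module
  rw [← hcomm, hl, map_smul, h₁]

section Wedge
variable {V E : Type*} [NormedAddCommGroup V] [InnerProductSpace ℝ V]
  [NormedAddCommGroup E] [InnerProductSpace ℝ E] {w : V →ₗ[ℝ] V →ₗ[ℝ] E}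

theorem eq_of_inner_wedge_eq (hspan : Submodule.span ℝ {ξ : E | ∃ x y : V, ξ = w x y} = ⊤)
    {ξ η : E} (h : ∀ c d : V, ⟪ξ, w c d⟫ = ⟪η, w c d⟫) : ξ = η := by
  have hle : Submodule.span ℝ {ξ : E | ∃ x y : V, ξ = w x y} ≤ (ℝ ∙ (ξ - η))ᗮ := by
    rw [Submodule.span_le]
    rintro _ ⟨c, d, rfl⟩
    rw [SetLike.mem_coe, Submodule.mem_orthogonal_singleton_iff_inner_right, inner_sub_left,
      h, sub_self]
  have hmem : ξ - η ∈ (ℝ ∙ (ξ - η))ᗮ := hle (hspan ▸ Submodule.mem_top)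
  rw [← sub_eq_zero, ← inner_self_eq_zero (𝕜 := ℝ)]
  exact Submodule.mem_orthogonal_singleton_iff_inner_right.mp hmem

theorem hodge_wedge_eq_det_smul (e : OrthonormalBasis (Fin 4) ℝ V)
    (hinner : ∀ a b c d : V, ⟪w a b, w c d⟫ = ⟪a, c⟫ * ⟪b, d⟫ - ⟪a, d⟫ * ⟪b, c⟫)
    (hspan : Submodule.span ℝ {ξ : E | ∃ x y : V, ξ = w x y} = ⊤) {hodge : E →ₗ[ℝ] E}
    (hhodge : ∀ a b c d : V, ⟪hodge (w a b), w c d⟫ = quadDet e a b c d)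
    (g : OrthonormalBasis (Fin 4) ℝ V) :
    hodge (w (g 0) (g 1)) = e.toBasis.det g • w (g 2) (g 3) := by
  refine eq_of_inner_wedge_eq hspan fun c d => ?_
  rw [hhodge, quadDet_eq_det_mul_quadDet e g, quadDet_apply_zero_one, real_inner_smul_left,
    hinner]

theorem hodge_wedge_eq_sign_smul (e : OrthonormalBasis (Fin 4) ℝ V)
    (hinner : ∀ a b c d : V, ⟪w a b, w c d⟫ = ⟪a, c⟫ * ⟪b, d⟫ - ⟪a, d⟫ * ⟪b, c⟫)
    (hspan : Submodule.span ℝ {ξ : E | ∃ x y : V, ξ = w x y} = ⊤) {hodge : E →ₗ[ℝ] E}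
    (hhodge : ∀ a b c d : V, ⟪hodge (w a b), w c d⟫ = quadDet e a b c d)
    {f : OrthonormalBasis (Fin 4) ℝ V} (hf : e.toBasis.det f = 1)
    (i j k l : Fin 4) (τ : Perm (Fin 4)) (hτ : ⇑τ = ![i, j, k, l]) :
    hodge (w (f i) (f j)) = ((Perm.sign τ : ℤ) : ℝ) • w (f k) (f l) := by
  have hdet : e.toBasis.det (f.reindex τ.symm) = Perm.sign τ := by
    rw [OrthonormalBasis.coe_reindex, Equiv.symm_symm, AlternatingMap.map_perm, hf,
      Units.smul_def, zsmul_one]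
  have h := hodge_wedge_eq_det_smul e hinner hspan hhodge (f.reindex τ.symm)
  rw [hdet] at h
  simpa [hτ] using h

theorem exists_orthonormalBasis_wedge_eigen [FiniteDimensional ℝ V]
    (hinner : ∀ a b c d : V, ⟪w a b, w c d⟫ = ⟪a, c⟫ * ⟪b, d⟫ - ⟪a, d⟫ * ⟪b, c⟫)
    {W : E →ₗ[ℝ] E} (hW : W.IsSymmetric) {v : V} (hv : ‖v‖ = 1)
    (hinv : ∀ ξ ∈ Submodule.span ℝ {ξ : E | ∃ u : V, ⟪v, u⟫ = 0 ∧ ξ = w v u},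
      W ξ ∈ Submodule.span ℝ {ξ : E | ∃ u : V, ⟪v, u⟫ = 0 ∧ ξ = w v u})
    {n : ℕ} (hn : finrank ℝ (ℝ ∙ v)ᗮ = n) :
    ∃ (b : OrthonormalBasis (Fin n) ℝ (ℝ ∙ v)ᗮ) (μ : Fin n → ℝ),
      ∀ i, W (w v (b i)) = μ i • w v (b i) := by
  have hvK : ∀ u : (ℝ ∙ v)ᗮ, ⟪v, (u : V)⟫ = 0 := fun u =>
    Submodule.mem_orthogonal_singleton_iff_inner_right.mp u.2
  let ι := (w v ∘ₗ (ℝ ∙ v)ᗮ.subtype).isometryOfInner fun x y => by simp [hinner, hv, hvK]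
  have hrange : Submodule.span ℝ {ξ : E | ∃ u : V, ⟪v, u⟫ = 0 ∧ ξ = w v u} =
      LinearMap.range ι.toLinearMap := by
    rw [← Submodule.span_eq (LinearMap.range ι.toLinearMap)]
    congr 1
    ext ξ
    constructor
    · rintro ⟨u, hu, rfl⟩
      exact ⟨⟨u, Submodule.mem_orthogonal_singleton_iff_inner_right.mpr hu⟩, rfl⟩
    · rintro ⟨u, rfl⟩
      exact ⟨u, hvK u, rfl⟩
  rw [hrange] at hinv
  exact hW.exists_orthonormalBasis_eigen_of_mapsTo_range ι hinv hn

end Wedge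

theorem eigenflag_dim4_diagonal_form_general
    {V E : Type*} [NormedAddCommGroup V] [InnerProductSpace ℝ V]
    [NormedAddCommGroup E] [InnerProductSpace ℝ E]
    [FiniteDimensional ℝ V]
    (e : OrthonormalBasis (Fin 4) ℝ V)
    (w : V →ₗ[ℝ] V →ₗ[ℝ] E)
    (hinner : ∀ a b c d : V, ⟪w a b, w c d⟫ = ⟪a, c⟫ * ⟪b, d⟫ - ⟪a, d⟫ * ⟪b, c⟫)
    (hspan : Submodule.span ℝ {ξ : E | ∃ x y : V, ξ = w x y} = ⊤)
    (hodge : E →ₗ[ℝ] E)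
    (hhodge : ∀ a b c d : V, ⟪hodge (w a b), w c d⟫ = quadDet e a b c d)
    (W : E →ₗ[ℝ] E) (hW : W.IsSymmetric)
    (hWp : ∀ ξ ∈ Module.End.eigenspace hodge (1 : ℝ),
      W ξ ∈ Module.End.eigenspace hodge (1 : ℝ))
    (hWm : ∀ ξ ∈ Module.End.eigenspace hodge (-1 : ℝ),
      W ξ ∈ Module.End.eigenspace hodge (-1 : ℝ))
    (v : V) (hv : ‖v‖ = 1)
    (hinv : ∀ ξ ∈ Submodule.span ℝ {ξ : E | ∃ u : V, ⟪v, u⟫ = 0 ∧ ξ = w v u},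
      W ξ ∈ Submodule.span ℝ {ξ : E | ∃ u : V, ⟪v, u⟫ = 0 ∧ ξ = w v u}) :
    ∃ f : OrthonormalBasis (Fin 4) ℝ V, f 0 = v ∧
      Matrix.det (Matrix.of fun i j => ⟪e i, f j⟫) = 1 ∧
      ∃ l12 l13 l14 : ℝ,
        W (w (f 0) (f 1)) = l12 • w (f 0) (f 1) ∧
        W (w (f 0) (f 2)) = l13 • w (f 0) (f 2) ∧
        W (w (f 0) (f 3)) = l14 • w (f 0) (f 3) ∧
        W (w (f 2) (f 3)) = l12 • w (f 2) (f 3) ∧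
        W (w (f 1) (f 3)) = l13 • w (f 1) (f 3) ∧
        W (w (f 1) (f 2)) = l14 • w (f 1) (f 2) := by
  have hK : finrank ℝ (ℝ ∙ v)ᗮ = 3 := by
    have : Fact (finrank ℝ V = 3 + 1) := ⟨by simp [finrank_eq_card_basis e.toBasis]⟩
    exact Submodule.finrank_orthogonal_span_singleton (norm_ne_zero_iff.mp (hv ▸ one_ne_zero))
  obtain ⟨b, μ, hb⟩ := exists_orthonormalBasis_wedge_eigen hinner hW hv hinv hK
  obtain ⟨f₁, hf₁0, hf₁b⟩ := exists_orthonormalBasis_fin_cons hv b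
  obtain ⟨f, hdet, hf, hf3⟩ := e.exists_flip_det_eq_one f₁ 3
  have hf0 : f 0 = v := by rw [hf 0 (by decide), hf₁0]
  have heig : ∀ j : Fin 3, W (w (f 0) (f j.succ)) = μ j • w (f 0) (f j.succ) := by
    intro j
    have hfb : f j.succ = b j ∨ f j.succ = -b j := by
      rw [← hf₁b]
      by_cases hj : j.succ = 3
      · rw [hj]; exact hf3
      · exact Or.inl (hf _ hj)
    rcases hfb with h | h <;> simp [hf0, h, hb]
  have hodge_even : ∀ i j k l (τ : Perm (Fin 4)), Perm.sign τ = 1 → ⇑τ = ![i, j, k, l] →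
      hodge (w (f i) (f j)) = w (f k) (f l) := fun i j k l τ hs hτ => by
    simpa [hs] using hodge_wedge_eq_sign_smul e hinner hspan hhodge hdet i j k l τ hτ
  have hodge_odd : ∀ i j k l (τ : Perm (Fin 4)), Perm.sign τ = -1 → ⇑τ = ![i, j, k, l] →
      hodge (w (f i) (f j)) = -w (f k) (f l) := fun i j k l τ hs hτ => by
    simpa [hs] using hodge_wedge_eq_sign_smul e hinner hspan hhodge hdet i j k l τ hτ
  refine ⟨f, hf0, by rwa [e.det_of_inner_eq_toBasis_det], μ 0, μ 1, μ 2,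
    heig 0, heig 1, heig 2, ?_, ?_, ?_⟩
  · exact apply_eq_smul_of_swap hWp hWm (hodge_even 0 1 2 3 1 (by decide) (by decide))
      (hodge_even 2 3 0 1 (c[0, 2] * c[1, 3]) (by decide) (by decide)) (heig 0)
  · have h := apply_eq_smul_of_swap hWp hWm (hodge_odd 0 2 1 3 c[1, 2] (by decide) (by decide))
      (by rw [map_neg, hodge_odd 1 3 0 2 c[0, 1, 3, 2] (by decide) (by decide), neg_neg])
      (heig 1)
    simpa using h
  · exact apply_eq_smul_of_swap hWp hWm (hodge_even 0 3 1 2 c[1, 3, 2] (by decide) (by decide))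
      (hodge_even 1 2 0 3 c[0, 1, 2] (by decide) (by decide)) (heig 2)

/-- Let `V` be a 4-dimensional oriented real inner product space (orientation given by
the orthonormal basis `e`; `Λ²V` modelled by `E` via `w`, with Hodge star `hodge`), and
let `W` be a self-adjoint endomorphism of `Λ²V` preserving `Λ⁺` and `Λ⁻` and satisfying
the eigenflag condition with unit vector `v`.  Then there is an oriented orthonormal
basis `f` with `f₁ = v` in which `W` is diagonal, with `W(f₁∧fⱼ) = λ₁ⱼ f₁∧fⱼ`,
`W(f₃∧f₄) = λ₁₂ f₃∧f₄`, `W(f₂∧f₄) = λ₁₃ f₂∧f₄`, `W(f₂∧f₃) = λ₁₄ f₂∧f₃`; i.e. `W⁺` and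
`W⁻` have the same eigenvalues `(λ₁₂, λ₁₃, λ₁₄)`. -/
theorem eigenflag_dim4_diagonal_form
    {V E : Type*} [NormedAddCommGroup V] [InnerProductSpace ℝ V]
    [NormedAddCommGroup E] [InnerProductSpace ℝ E]
    [FiniteDimensional ℝ V] [FiniteDimensional ℝ E]
    (e : OrthonormalBasis (Fin 4) ℝ V)
    (w : V →ₗ[ℝ] V →ₗ[ℝ] E)
    (halt : ∀ x : V, w x x = 0)
    (hinner : ∀ a b c d : V, ⟪w a b, w c d⟫ = ⟪a, c⟫ * ⟪b, d⟫ - ⟪a, d⟫ * ⟪b, c⟫)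
    (hspan : Submodule.span ℝ {ξ : E | ∃ x y : V, ξ = w x y} = ⊤)
    (hodge : E →ₗ[ℝ] E)
    (hhodge : ∀ a b c d : V, ⟪hodge (w a b), w c d⟫ = quadDet e a b c d)
    (W : E →ₗ[ℝ] E) (hW : W.IsSymmetric)
    (hWp : ∀ ξ ∈ Module.End.eigenspace hodge (1 : ℝ),
      W ξ ∈ Module.End.eigenspace hodge (1 : ℝ))
    (hWm : ∀ ξ ∈ Module.End.eigenspace hodge (-1 : ℝ),
      W ξ ∈ Module.End.eigenspace hodge (-1 : ℝ))
    (v : V) (hv : ‖v‖ = 1)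
    (hinv : ∀ ξ ∈ Submodule.span ℝ {ξ : E | ∃ u : V, ⟪v, u⟫ = 0 ∧ ξ = w v u},
      W ξ ∈ Submodule.span ℝ {ξ : E | ∃ u : V, ⟪v, u⟫ = 0 ∧ ξ = w v u}) :
    ∃ f : OrthonormalBasis (Fin 4) ℝ V, f 0 = v ∧
      Matrix.det (Matrix.of fun i j => ⟪e i, f j⟫) = 1 ∧
      ∃ l12 l13 l14 : ℝ,
        W (w (f 0) (f 1)) = l12 • w (f 0) (f 1) ∧
        W (w (f 0) (f 2)) = l13 • w (f 0) (f 2) ∧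
        W (w (f 0) (f 3)) = l14 • w (f 0) (f 3) ∧
        W (w (f 2) (f 3)) = l12 • w (f 2) (f 3) ∧
        W (w (f 1) (f 3)) = l13 • w (f 1) (f 3) ∧
        W (w (f 1) (f 2)) = l14 • w (f 1) (f 2) :=
  eigenflag_dim4_diagonal_form_general e w hinner hspan hodge hhodge W hW hWp hWm v hv hinv
end
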